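/- arXiv:2411.08590 — 7 statements merged into one kernel-verified Lean document; each statement's English description precedes it below -/
import Mathlib

section
/- Let f := indicator of F := {q ∈ ℝ^D : ‖q‖ ≤ 1 ∧ 1ᵀq = 0}. Then f*(z) = ‖z − μ_z·1‖ where μ_z = (1ᵀz)/D, and for z not a multiple of the all-ones vector, the unique maximizer of ⟨z, q⟩ over F is (z − μ_z·1)/‖z − μ_z·1‖. -/
/-!
A centred vector `q` (`∑ i, q i = 0`) is orthogonal to `1`, so on `F` the functional `⟪z, ·⟫`
coincides with `⟪P z, ·⟫`, where `P z = z - μ_z • 1` is the orthogonal projection of `z` onto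
`1ᗮ`. The unit vector in the direction of `P z` lies in `F`, hence by Cauchy–Schwarz the supremum is
`‖P z‖`, and the equality case of Cauchy–Schwarz makes that vector the only maximiser.
-/

open scoped RealInnerProductSpace

section SupportFunction

variable {E : Type*} [NormedAddCommGroup E] [InnerProductSpace ℝ E]

theorem isGreatest_inner_unitBall_of_mem (K : Submodule ℝ E) {w : E} (hw : w ∈ K) :
    IsGreatest {v | ∃ q, ‖q‖ ≤ 1 ∧ q ∈ K ∧ v = ⟪w, q⟫} ‖w‖ := by
  refine ⟨?_, ?_⟩
  · rcases eq_or_ne w 0 with rfl | hw0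
    · exact ⟨0, by simp, K.zero_mem, by simp⟩
    · refine ⟨‖w‖⁻¹ • w, by simp [norm_smul, hw0], K.smul_mem _ hw, ?_⟩
      rw [real_inner_smul_right, real_inner_self_eq_norm_sq]
      field_simp
  · rintro v ⟨q, hq, -, rfl⟩
    calc ⟪w, q⟫ ≤ ‖w‖ * ‖q‖ := real_inner_le_norm w q
      _ ≤ ‖w‖ := mul_le_of_le_one_right (norm_nonneg w) hq

theorem eq_inv_norm_smul_of_inner_eq_norm {w q : E} (hw : w ≠ 0) (hq : ‖q‖ ≤ 1)
    (h : ⟪w, q⟫ = ‖w‖) : q = ‖w‖⁻¹ • w := by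
  have hw' : 0 < ‖w‖ := norm_pos_iff.mpr hw
  have hq1 : ‖q‖ = 1 := by
    have := real_inner_le_norm w q
    nlinarith
  have hcollinear : ‖q‖ • w = ‖w‖ • q :=
    inner_eq_norm_mul_iff_real.mp (by rw [h, hq1, mul_one])
  rw [hq1, one_smul] at hcollinear
  rw [eq_inv_smul_iff₀ hw'.ne']
  exact hcollinear.symm

variable (K : Submodule ℝ E) [K.HasOrthogonalProjection]

theorem inner_starProjection_left_of_mem (z : E) {q : E} (hq : q ∈ K) :
    ⟪K.starProjection z, q⟫ = ⟪z, q⟫ := by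
  rw [K.inner_starProjection_left_eq_right, K.starProjection_eq_self_iff.mpr hq]

theorem isGreatest_inner_unitBall_submodule (z : E) :
    IsGreatest {v | ∃ q, ‖q‖ ≤ 1 ∧ q ∈ K ∧ v = ⟪z, q⟫} ‖K.starProjection z‖ := by
  convert isGreatest_inner_unitBall_of_mem K (K.starProjection_apply_mem z) using 5 with v q
  exact and_congr_right fun _ ↦ and_congr_right fun hqK ↦ by
    rw [inner_starProjection_left_of_mem K z hqK]

theorem eq_of_inner_eq_norm_starProjection {z q : E} (hz : K.starProjection z ≠ 0)
    (hq : ‖q‖ ≤ 1) (hqK : q ∈ K) (h : ⟪z, q⟫ = ‖K.starProjection z‖) :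
    q = ‖K.starProjection z‖⁻¹ • K.starProjection z :=
  eq_inv_norm_smul_of_inner_eq_norm hz hq (by rw [inner_starProjection_left_of_mem K z hqK, h])

end SupportFunction

section CenteredBall

variable {D : ℕ} {ones : EuclideanSpace ℝ (Fin D)}

theorem inner_ones_eq_sum (hones : ∀ i, ones i = 1) (q : EuclideanSpace ℝ (Fin D)) :
    ⟪ones, q⟫ = ∑ i, q i := by
  simp [PiLp.inner_apply, hones]

theorem starProjection_orthogonal_span_ones (hones : ∀ i, ones i = 1)
    (z : EuclideanSpace ℝ (Fin D)) :
    (ℝ ∙ ones)ᗮ.starProjection z = z - ((∑ i, z i) / D) • ones := by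
  have hnorm_sq : ‖ones‖ ^ 2 = D := by
    rw [← real_inner_self_eq_norm_sq, inner_ones_eq_sum hones]; simp [hones]
  rw [Submodule.starProjection_orthogonal_val, Submodule.starProjection_singleton, hnorm_sq,
    inner_ones_eq_sum hones]
  rfl

end CenteredBall

theorem conjugate_centered_ball_indicator_general {D : ℕ}
    (ones : EuclideanSpace ℝ (Fin D)) (hones : ∀ i, ones i = 1)
    (z : EuclideanSpace ℝ (Fin D)) :
    IsLUB {v : ℝ | ∃ q : EuclideanSpace ℝ (Fin D),
        ‖q‖ ≤ 1 ∧ (∑ i, q i) = 0 ∧ v = (inner ℝ z q : ℝ)}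
      ‖z - ((∑ i, z i) / D) • ones‖ ∧
    ((∀ c : ℝ, z ≠ c • ones) →
      ∀ q : EuclideanSpace ℝ (Fin D), ‖q‖ ≤ 1 → (∑ i, q i) = 0 →
        (inner ℝ z q : ℝ) = ‖z - ((∑ i, z i) / D) • ones‖ →
        q = ‖z - ((∑ i, z i) / D) • ones‖⁻¹ • (z - ((∑ i, z i) / D) • ones)) := by
  have hcentered_iff : ∀ q, (∑ i, q i) = 0 ↔ q ∈ (ℝ ∙ ones)ᗮ := fun q => by
    rw [Submodule.mem_orthogonal_singleton_iff_inner_right, inner_ones_eq_sum hones]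
  simp only [hcentered_iff, ← starProjection_orthogonal_span_ones hones z]
  refine ⟨(isGreatest_inner_unitBall_submodule _ z).isLUB, fun hz q hq hqK h => ?_⟩
  refine eq_of_inner_eq_norm_starProjection _ ?_ hq hqK h
  rw [starProjection_orthogonal_span_ones hones z, sub_ne_zero]
  exact hz _

/-- For `F = {q : ‖q‖ ≤ 1 ∧ 1ᵀq = 0}`, the conjugate of its indicator is
`f*(z) = ‖z − μ_z 1‖` where `μ_z = (1ᵀz)/D`, and for `z` not a multiple of the all-ones
vector, the unique maximizer of `⟨z, q⟩` over `F` is `(z − μ_z 1)/‖z − μ_z 1‖`. -/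
theorem conjugate_centered_ball_indicator {D : ℕ} (hD : 0 < D)
    (ones : EuclideanSpace ℝ (Fin D)) (hones : ∀ i, ones i = 1)
    (z : EuclideanSpace ℝ (Fin D)) :
    IsLUB {v : ℝ | ∃ q : EuclideanSpace ℝ (Fin D),
        ‖q‖ ≤ 1 ∧ (∑ i, q i) = 0 ∧ v = (inner ℝ z q : ℝ)}
      ‖z - ((∑ i, z i) / D) • ones‖ ∧
    ((∀ c : ℝ, z ≠ c • ones) →
      ∀ q : EuclideanSpace ℝ (Fin D), ‖q‖ ≤ 1 → (∑ i, q i) = 0 →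
        (inner ℝ z q : ℝ) = ‖z - ((∑ i, z i) / D) • ones‖ →
        q = ‖z - ((∑ i, z i) / D) • ones‖⁻¹ • (z - ((∑ i, z i) / D) • ones)) :=
  conjugate_centered_ball_indicator_general ones hones z
end

section
/- Let Ψ be the indicator of S := {q : ‖q − δ‖ ≤ η√D ∧ 1ᵀ(q − δ) = 0}, with η > 0 and δ ∈ ℝ^D. Then for z not a multiple of 1, the unique maximizer of ⟨z, q⟩ over S equals LayerNorm(z; η, δ) := η (z − μ_z·1)/√((1/D)Σᵢ(zᵢ − μ_z)²) + δ. -/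
/-!
Write `z = w + μ_z 1` with `w = z - μ_z 1` centred, so `w ⟂ 1`. On the affine plane `δ + 1ᗮ` the
functional `⟪z, ·⟫` agrees with `⟪w, · - δ⟫` up to the constant `⟪z, δ⟫`, so the problem becomes
maximizing `⟪w, y⟫` over `y ∈ 1ᗮ` with `‖y‖ ≤ η√D`. Cauchy–Schwarz bounds this by `η√D ‖w‖`, and its
equality case (with `w ∈ 1ᗮ` attaining the bound after rescaling) shows the unique maximizer is
`(η√D / ‖w‖) w`. Finally `‖w‖ / √D = √((1/D) Σᵢ (zᵢ - μ_z)²)`.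
-/

open RealInnerProductSpace

section
variable {E : Type*} [NormedAddCommGroup E] [InnerProductSpace ℝ E]

theorem inner_le_mul_norm_of_norm_le {w x : E} {R : ℝ} (hx : ‖x‖ ≤ R) : ⟪w, x⟫ ≤ R * ‖w‖ :=
  (real_inner_le_norm w x).trans (by rw [mul_comm]; gcongr)

theorem eq_smul_of_norm_le_of_inner_eq {w x : E} {R : ℝ} (hw : w ≠ 0) (hx : ‖x‖ ≤ R)
    (h : ⟪w, x⟫ = R * ‖w‖) : x = (R / ‖w‖) • w := by
  have hw₀ : 0 < ‖w‖ := norm_pos_iff.mpr hw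
  have hxR : ‖x‖ = R := by
    refine le_antisymm hx (le_of_mul_le_mul_right ?_ hw₀)
    rw [← h, mul_comm]
    exact real_inner_le_norm w x
  have hcs : ‖x‖ • w = ‖w‖ • x := inner_eq_norm_mul_iff_real.mp (by rw [h, hxR, mul_comm])
  rw [hxR] at hcs
  rw [div_eq_inv_mul, mul_smul, hcs, smul_smul, inv_mul_cancel₀ hw₀.ne', one_smul]

theorem maximizes_inner_on_shifted_ball_iff {K : Submodule ℝ E} {z w δ x : E} {R : ℝ}
    (hR : 0 ≤ R) (hwK : w ∈ K) (hw : w ≠ 0) (hzw : z - w ∈ Kᗮ) :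
    (‖x - δ‖ ≤ R ∧ x - δ ∈ K ∧ ∀ y, ‖y - δ‖ ≤ R → y - δ ∈ K → ⟪z, y⟫ ≤ ⟪z, x⟫) ↔
      x = (R / ‖w‖) • w + δ := by
  have shift : ∀ y, y - δ ∈ K → ⟪z, y⟫ = ⟪w, y - δ⟫ + ⟪z, δ⟫ := by
    intro y hy
    have : ⟪z - w, y - δ⟫ = 0 := Submodule.inner_left_of_mem_orthogonal hy hzw
    rw [inner_sub_left, inner_sub_right, inner_sub_right] at this
    rw [inner_sub_right]
    linarith
  set x₀ := (R / ‖w‖) • w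
  have hw₀ : 0 < ‖w‖ := norm_pos_iff.mpr hw
  have hx₀K : x₀ + δ - δ ∈ K := by simpa using K.smul_mem _ hwK
  have hx₀R : ‖x₀ + δ - δ‖ = R := by
    simp [x₀, norm_smul, abs_of_nonneg hR, hw₀.ne']
  have hx₀w : ⟪w, x₀ + δ - δ⟫ = R * ‖w‖ := by
    simp only [add_sub_cancel_right, x₀, inner_smul_right, real_inner_self_eq_norm_sq]
    field_simp
  constructor
  · rintro ⟨hxR, hxK, hmax⟩
    have hle := hmax (x₀ + δ) hx₀R.le hx₀K
    rw [shift _ hxK, shift _ hx₀K, hx₀w] at hle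
    have heq : ⟪w, x - δ⟫ = R * ‖w‖ :=
      le_antisymm (inner_le_mul_norm_of_norm_le hxR) (by linarith)
    exact sub_eq_iff_eq_add.mp (eq_smul_of_norm_le_of_inner_eq hw hxR heq)
  · rintro rfl
    refine ⟨hx₀R.le, hx₀K, fun y hyR hyK => ?_⟩
    rw [shift _ hyK, shift _ hx₀K, hx₀w]
    linarith [inner_le_mul_norm_of_norm_le (w := w) hyR]

end

theorem sum_eq_zero_iff_mem_orthogonal_span {ι : Type*} [Fintype ι] {ones : EuclideanSpace ℝ ι}
    (hones : ∀ i, ones i = 1) (v : EuclideanSpace ℝ ι) :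
    (∑ i, v i) = 0 ↔ v ∈ (ℝ ∙ ones)ᗮ := by
  simp [Submodule.mem_orthogonal_singleton_iff_inner_right, PiLp.inner_apply, hones]

theorem sum_sub_mean_eq_zero {D : ℕ} (hD : D ≠ 0) (v : Fin D → ℝ) :
    ∑ i, (v i - (∑ j, v j) / D) = 0 := by
  have hD' : (D : ℝ) ≠ 0 := Nat.cast_ne_zero.mpr hD
  simp [Finset.sum_sub_distrib, mul_div_cancel₀ _ hD']

theorem sqrt_mean_sq_eq_norm_div_sqrt {D : ℕ} (v : EuclideanSpace ℝ (Fin D)) :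
    √((1 / D) * ∑ i, v i ^ 2) = ‖v‖ / √D := by
  rw [← EuclideanSpace.real_norm_sq_eq, one_div_mul_eq_div, Real.sqrt_div' _ D.cast_nonneg,
    Real.sqrt_sq (norm_nonneg v)]

/-- Layer normalization (Proposition 3). For `Ψ` the indicator of
`S = {q : ‖q − δ‖ ≤ η√D ∧ 1ᵀ(q − δ) = 0}` with `η > 0`, and `z` not a multiple of the
all-ones vector, the unique maximizer of `⟨z, q⟩` over `S` equals
`LayerNorm(z; η, δ) = η (z − μ_z 1)/√((1/D)Σᵢ(zᵢ − μ_z)²) + δ`. -/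
theorem layerNorm_is_argmax {D : ℕ} (hD : 0 < D) (η : ℝ) (hη : 0 < η)
    (ones : EuclideanSpace ℝ (Fin D)) (hones : ∀ i, ones i = 1)
    (δ z : EuclideanSpace ℝ (Fin D))
    (hz : ∀ c : ℝ, z ≠ c • ones) :
    ∀ q : EuclideanSpace ℝ (Fin D),
      (‖q - δ‖ ≤ η * Real.sqrt D ∧ (∑ i, (q i - δ i)) = 0 ∧
        ∀ q' : EuclideanSpace ℝ (Fin D),
          ‖q' - δ‖ ≤ η * Real.sqrt D → (∑ i, (q' i - δ i)) = 0 →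
          (inner ℝ z q' : ℝ) ≤ (inner ℝ z q : ℝ)) ↔
      q = (η / Real.sqrt ((1 / D) * ∑ i, (z i - (∑ j, z j) / D) ^ 2)) •
            (z - ((∑ j, z j) / D) • ones) + δ := by
  intro q
  set μ := (∑ j, z j) / D
  set w := z - μ • ones
  have hwi : ∀ i, w i = z i - μ := fun i => by simp [w, hones]
  have hK : ∀ v, (∑ i, (v i - δ i)) = 0 ↔ v - δ ∈ (ℝ ∙ ones)ᗮ := fun v => by
    rw [← sum_eq_zero_iff_mem_orthogonal_span hones]
    simp only [PiLp.sub_apply]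
  have hwK : w ∈ (ℝ ∙ ones)ᗮ := by
    rw [← sum_eq_zero_iff_mem_orthogonal_span hones]
    simpa only [hwi] using sum_sub_mean_eq_zero hD.ne' z
  have hw : w ≠ 0 := fun h => hz μ (sub_eq_zero.mp h)
  have hzw : z - w ∈ (ℝ ∙ ones)ᗮᗮ := Submodule.le_orthogonal_orthogonal _ <| by
    simpa [w] using Submodule.smul_mem _ μ (Submodule.mem_span_singleton_self ones)
  have hscale : η / √((1 / D) * ∑ i, (z i - μ) ^ 2) = η * √D / ‖w‖ := by
    simp_rw [← hwi, sqrt_mean_sq_eq_norm_div_sqrt, div_div_eq_mul_div]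
  rw [hscale, ← maximizes_inner_on_shifted_ball_iff (by positivity) hwK hw hzw]
  simp only [hK]
end

section
/- Let E(q) = −β⁻¹L_Ω(βXq, 1/N) + (1/2)‖q − μ_X‖² + (1/2)(M² − ‖μ_X‖²), where Ω is a generalized negentropy on Δ_N, μ_X = Xᵀ1/N, M = maxᵢ‖xᵢ‖. If q = Xᵀy for some y ∈ Δ_N, then E(q) ≥ (1/2)‖x_k − q‖² ≥ 0 where k = argmaxᵢ ⟨q, xᵢ⟩. -/
/-!
Evaluating `L_Ω(θ, 1/N)` at `θ = βXq` and using `L_Ω(θ, 1/N) ≤ maxᵢ θᵢ − 1ᵀθ/N`, the energy is at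
least `−⟨x_k, q⟩ + ⟨μ_X, q⟩ + ½‖q − μ_X‖² + ½(M² − ‖μ_X‖²) = ½‖q‖² − ⟨x_k, q⟩ + ½M²`, and
`M ≥ ‖x_k‖` turns this into `½‖x_k − q‖²`. The bound on `L_Ω` holds because a convex,
permutation-invariant `Ω` is minimised on `Δ_N` at the barycentre `1/N`.
-/

open Finset

/-- The barycentre is the average of the cyclic shifts of any `y ∈ Δ_N`, so Jensen applies. -/
theorem ConvexOn.apply_uniform_le_of_perm_invariant {N : ℕ} [NeZero N]
    {Ω : (Fin N → ℝ) → ℝ} (hconv : ConvexOn ℝ (stdSimplex ℝ (Fin N)) Ω)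
    (hperm : ∀ σ : Equiv.Perm (Fin N), ∀ y ∈ stdSimplex ℝ (Fin N), Ω (y ∘ σ) = Ω y)
    {y : Fin N → ℝ} (hy : y ∈ stdSimplex ℝ (Fin N)) :
    Ω (fun _ => 1 / N) ≤ Ω y := by
  have hN : (N : ℝ) ≠ 0 := Nat.cast_ne_zero.mpr (NeZero.ne N)
  let shift : Fin N → Fin N → ℝ := fun c => y ∘ Equiv.addRight c
  have hshift_mem (c : Fin N) : shift c ∈ stdSimplex ℝ (Fin N) :=
    ⟨fun j => hy.1 _, (Equiv.sum_comp (Equiv.addRight c) y).trans hy.2⟩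
  have havg : (fun _ => (1 : ℝ) / N) = ∑ c, (N : ℝ)⁻¹ • shift c := by
    funext j
    have hsum : ∑ c : Fin N, y (j + c) = 1 := (Equiv.sum_comp (Equiv.addLeft j) y).trans hy.2
    simp [shift, ← mul_sum, hsum]
  calc Ω (fun _ => 1 / N)
      ≤ ∑ c, (N : ℝ)⁻¹ • Ω (shift c) := havg ▸ hconv.map_sum_le (fun _ _ => by positivity)
        (by simp [hN]) (fun c _ => hshift_mem c)
    _ = Ω y := by
      simp only [shift, hperm _ y hy, smul_eq_mul, sum_const, card_univ, Fintype.card_fin,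
        nsmul_eq_mul]
      field_simp

theorem sum_mul_le_of_mem_stdSimplex {ι : Type*} [Fintype ι] {θ z : ι → ℝ} {k : ι}
    (hk : ∀ i, θ i ≤ θ k) (hz : z ∈ stdSimplex ℝ ι) :
    ∑ i, θ i * z i ≤ θ k :=
  calc ∑ i, θ i * z i ≤ ∑ i, θ k * z i :=
        sum_le_sum fun i _ => mul_le_mul_of_nonneg_right (hk i) (hz.1 i)
    _ = θ k := by rw [← mul_sum, hz.2, mul_one]

/-- The Fenchel–Young bound `L_Ω(θ, 1/N) ≤ maxᵢ θᵢ − 1ᵀθ/N`, before subtracting the mean. -/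
theorem apply_uniform_add_conjugate_le_max {N : ℕ} [NeZero N]
    {Ω Ωstar : (Fin N → ℝ) → ℝ} (hconv : ConvexOn ℝ (stdSimplex ℝ (Fin N)) Ω)
    (hperm : ∀ σ : Equiv.Perm (Fin N), ∀ y ∈ stdSimplex ℝ (Fin N), Ω (y ∘ σ) = Ω y)
    {θ : Fin N → ℝ}
    (hΩstar : Ωstar θ ∈ {v : ℝ | ∃ y ∈ stdSimplex ℝ (Fin N), v = (∑ i, θ i * y i) - Ω y})
    {k : Fin N} (hk : ∀ i, θ i ≤ θ k) :
    Ω (fun _ => 1 / N) + Ωstar θ ≤ θ k := by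
  obtain ⟨z, hz, hval⟩ := hΩstar
  rw [hval]
  linarith [sum_mul_le_of_mem_stdSimplex hk hz, hconv.apply_uniform_le_of_perm_invariant hperm hz]

theorem half_norm_sub_sq_le_of_norm_le {E : Type*} [NormedAddCommGroup E]
    [InnerProductSpace ℝ E]
    {a : E} {M : ℝ} (ha : ‖a‖ ≤ M) (q μ : E) :
    (1 / 2) * ‖a - q‖ ^ 2 ≤
      -inner ℝ a q + inner ℝ μ q + (1 / 2) * ‖q - μ‖ ^ 2 + (1 / 2) * (M ^ 2 - ‖μ‖ ^ 2) := by
  have hsq : ‖a‖ ^ 2 ≤ M ^ 2 := pow_le_pow_left₀ (norm_nonneg a) ha 2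
  rw [norm_sub_sq_real, norm_sub_sq_real, real_inner_comm q μ]
  linarith

theorem sum_mul_inner_mul_one_div {E : Type*} [NormedAddCommGroup E] [InnerProductSpace ℝ E]
    {N : ℕ} (x : Fin N → E) (β : ℝ) (q : E) :
    ∑ i, β * inner ℝ (x i) q * (1 / N) = β * inner ℝ ((N : ℝ)⁻¹ • ∑ i, x i) q := by
  rw [real_inner_smul_left, sum_inner, mul_sum, mul_sum]
  refine sum_congr rfl fun i _ => ?_
  ring

theorem hfy_energy_lower_bound_general {N D : ℕ} [NeZero N]
    (x : Fin N → EuclideanSpace ℝ (Fin D)) (β : ℝ) (hβ : 0 < β)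
    (Ω : (Fin N → ℝ) → ℝ)
    (hconv : StrictConvexOn ℝ (stdSimplex ℝ (Fin N)) Ω)
    (hperm : ∀ (σ : Equiv.Perm (Fin N)), ∀ y ∈ stdSimplex ℝ (Fin N), Ω (y ∘ σ) = Ω y)
    (Ωstar : (Fin N → ℝ) → ℝ)
    (hΩstar : ∀ θ, IsGreatest
      {v : ℝ | ∃ y ∈ stdSimplex ℝ (Fin N), v = (∑ i, θ i * y i) - Ω y} (Ωstar θ))
    (M : ℝ) (hM : IsGreatest (Set.range fun i => ‖x i‖) M)
    (y : Fin N → ℝ)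
    (q : EuclideanSpace ℝ (Fin D))
    (k : Fin N) (hk : ∀ j, (inner ℝ q (x j) : ℝ) ≤ (inner ℝ q (x k) : ℝ)) :
    (1 / 2) * ‖x k - q‖ ^ 2 ≤
      -β⁻¹ * (Ω (fun _ => 1 / N) +
          Ωstar (fun i => β * (inner ℝ (x i) q : ℝ)) -
          (∑ i, (β * (inner ℝ (x i) q : ℝ)) * (1 / N)))
        + (1 / 2) * ‖q - (N : ℝ)⁻¹ • ∑ i, x i‖ ^ 2
        + (1 / 2) * (M ^ 2 - ‖(N : ℝ)⁻¹ • ∑ i, x i‖ ^ 2) ∧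
    0 ≤ (1 / 2) * ‖x k - q‖ ^ 2 := by
  set μ := (N : ℝ)⁻¹ • ∑ i, x i
  have hθk (i : Fin N) : β * inner ℝ (x i) q ≤ β * inner ℝ (x k) q := by
    rw [real_inner_comm q (x i), real_inner_comm q (x k)]
    exact mul_le_mul_of_nonneg_left (hk i) hβ.le
  have hFY := apply_uniform_add_conjugate_le_max hconv.convexOn hperm (hΩstar _).1 hθk
  have hloss : -β⁻¹ * (β * inner ℝ (x k) q - β * inner ℝ μ q) ≤
      -β⁻¹ * (Ω (fun _ => 1 / N) + Ωstar (fun i => β * inner ℝ (x i) q) -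
        ∑ i, β * inner ℝ (x i) q * (1 / N)) := by
    rw [sum_mul_inner_mul_one_div]
    exact mul_le_mul_of_nonpos_left (by linarith) (by simp [hβ.le])
  have hscale : -β⁻¹ * (β * inner ℝ (x k) q - β * inner ℝ μ q) =
      -inner ℝ (x k) q + inner ℝ μ q := by
    field_simp
    ring
  refine ⟨?_, by positivity⟩
  linarith [half_norm_sub_sq_le_of_norm_le (hM.2 ⟨k, rfl⟩) q μ]

/-- Lower bound on the sparse HFY energy. With
`E(q) = −β⁻¹ L_Ω(βXq, 1/N) + ½‖q − μ_X‖² + ½(M² − ‖μ_X‖²)`, `Ω` a generalized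
negentropy on `Δ_N`, `μ_X = Xᵀ1/N`, `M = maxᵢ‖xᵢ‖`: if `q = Xᵀy` for some `y ∈ Δ_N`,
then `E(q) ≥ ½‖x_k − q‖² ≥ 0`, where `k = argmaxᵢ ⟨q, xᵢ⟩`. -/
theorem hfy_energy_lower_bound {N D : ℕ} [NeZero N]
    (x : Fin N → EuclideanSpace ℝ (Fin D)) (β : ℝ) (hβ : 0 < β)
    (Ω : (Fin N → ℝ) → ℝ)
    (hzero : ∀ i : Fin N, Ω (fun j => if j = i then 1 else 0) = 0)
    (hconv : StrictConvexOn ℝ (stdSimplex ℝ (Fin N)) Ω)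
    (hperm : ∀ (σ : Equiv.Perm (Fin N)), ∀ y ∈ stdSimplex ℝ (Fin N), Ω (y ∘ σ) = Ω y)
    (Ωstar : (Fin N → ℝ) → ℝ)
    (hΩstar : ∀ θ, IsGreatest
      {v : ℝ | ∃ y ∈ stdSimplex ℝ (Fin N), v = (∑ i, θ i * y i) - Ω y} (Ωstar θ))
    (M : ℝ) (hM : IsGreatest (Set.range fun i => ‖x i‖) M)
    (y : Fin N → ℝ) (hy : y ∈ stdSimplex ℝ (Fin N))
    (q : EuclideanSpace ℝ (Fin D)) (hq : q = ∑ i, y i • x i)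
    (k : Fin N) (hk : ∀ j, (inner ℝ q (x j) : ℝ) ≤ (inner ℝ q (x k) : ℝ)) :
    (1 / 2) * ‖x k - q‖ ^ 2 ≤
      -β⁻¹ * (Ω (fun _ => 1 / N) +
          Ωstar (fun i => β * (inner ℝ (x i) q : ℝ)) -
          (∑ i, (β * (inner ℝ (x i) q : ℝ)) * (1 / N)))
        + (1 / 2) * ‖q - (N : ℝ)⁻¹ • ∑ i, x i‖ ^ 2
        + (1 / 2) * (M ^ 2 - ‖(N : ℝ)⁻¹ • ∑ i, x i‖ ^ 2) ∧
    0 ≤ (1 / 2) * ‖x k - q‖ ^ 2 :=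
  hfy_energy_lower_bound_general x β hβ Ω hconv hperm Ωstar hΩstar M hM y q k hk
end

section
/- Under the same setup, if q = Xᵀy for y ∈ Δ_N, the energy satisfies the upper bound E(q) ≤ min{2M², −β⁻¹Ω(1/N) + (1/2)M²}. -/
/-!
Expanding the quadratic terms, the energy is `E(q) = ½M² + ½‖q‖² - β⁻¹ (Ω(1/N) + Ω*(βXq))`.
Fenchel–Young at the uniform point gives `Ω(1/N) + Ω*(βXq) ≥ β ⟨μ_X, q⟩`, hence
`E(q) ≤ ½M² + ½‖q‖² - ⟨μ_X, q⟩ ≤ 2M²`, since `q` and `μ_X` are convex combinations of the `xᵢ`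
and so lie in the ball of radius `M`. Fenchel–Young at `y` gives `Ω*(βXq) ≥ β‖q‖² - Ω(y) ≥ β‖q‖²`,
because a convex function vanishing at the vertices of the simplex is nonpositive on it; hence
`E(q) ≤ ½M² - ½‖q‖² - β⁻¹Ω(1/N)`.
-/

open Finset

lemma ConvexOn.nonpos_of_mem_stdSimplex {ι : Type*} [Fintype ι] [DecidableEq ι]
    {f : (ι → ℝ) → ℝ} (hf : ConvexOn ℝ (stdSimplex ℝ ι) f)
    (hvert : ∀ i, f (Pi.single i 1) = 0) {y : ι → ℝ} (hy : y ∈ stdSimplex ℝ ι) : f y ≤ 0 := by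
  rw [← convexHull_rangle_single_eq_stdSimplex] at hy
  obtain ⟨_, ⟨i, rfl⟩, hle⟩ := hf.exists_ge_of_mem_convexHull
    (Set.range_subset_iff.2 (single_mem_stdSimplex ℝ)) hy
  exact hle.trans (hvert i).le

lemma uniform_mem_stdSimplex (N : ℕ) [NeZero N] :
    (fun _ => 1 / (N : ℝ)) ∈ stdSimplex ℝ (Fin N) :=
  ⟨fun _ => by positivity, by simp⟩

lemma norm_sum_smul_le_of_mem_stdSimplex {ι E : Type*} [Fintype ι] [SeminormedAddCommGroup E]
    [NormedSpace ℝ E] {w : ι → ℝ} (hw : w ∈ stdSimplex ℝ ι) {v : ι → E} {M : ℝ}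
    (hv : ∀ i, ‖v i‖ ≤ M) : ‖∑ i, w i • v i‖ ≤ M := by
  simpa using (convex_closedBall (0 : E) M).sum_mem (fun i _ => hw.1 i) hw.2
    (fun i _ => mem_closedBall_zero_iff.2 (hv i))

section InnerProduct

variable {ι E : Type*} [Fintype ι] [NormedAddCommGroup E] [InnerProductSpace ℝ E]

lemma sum_inner_mul_eq_norm_sq {x : ι → E} {y : ι → ℝ} {q : E} (hq : q = ∑ i, y i • x i) :
    ∑ i, inner ℝ (x i) q * y i = ‖q‖ ^ 2 := by
  rw [← real_inner_self_eq_norm_sq]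
  nth_rw 2 [hq]
  simp only [inner_sum, real_inner_smul_right, real_inner_comm q, mul_comm]

lemma sum_inner_mul_one_div_eq_inner_mean {N : ℕ} (x : Fin N → E) (q : E) :
    ∑ i, inner ℝ (x i) q * (1 / N) = inner ℝ ((N : ℝ)⁻¹ • ∑ i, x i) q := by
  rw [real_inner_smul_left, sum_inner, mul_sum]
  simp only [one_div, mul_comm]

lemma hfy_energy_eq {N : ℕ} (x : Fin N → E) (q : E) {β : ℝ} (hβ : β ≠ 0) (a s M : ℝ) :
    -β⁻¹ * (a + s - ∑ i, β * inner ℝ (x i) q * (1 / N))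
      + 1 / 2 * ‖q - (N : ℝ)⁻¹ • ∑ i, x i‖ ^ 2
      + 1 / 2 * (M ^ 2 - ‖(N : ℝ)⁻¹ • ∑ i, x i‖ ^ 2)
      = 1 / 2 * M ^ 2 + 1 / 2 * ‖q‖ ^ 2 - β⁻¹ * (a + s) := by
  simp only [mul_assoc, ← mul_sum]
  rw [sum_inner_mul_one_div_eq_inner_mean, norm_sub_sq_real, real_inner_comm q]
  field_simp
  ring

end InnerProduct

theorem hfy_energy_upper_bound_general {N D : ℕ} [NeZero N]
    (x : Fin N → EuclideanSpace ℝ (Fin D)) (β : ℝ) (hβ : 0 < β)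
    (Ω : (Fin N → ℝ) → ℝ)
    (hzero : ∀ i : Fin N, Ω (fun j => if j = i then 1 else 0) = 0)
    (hconv : StrictConvexOn ℝ (stdSimplex ℝ (Fin N)) Ω)
    (Ωstar : (Fin N → ℝ) → ℝ)
    (hΩstar : ∀ θ, IsGreatest
      {v : ℝ | ∃ y ∈ stdSimplex ℝ (Fin N), v = (∑ i, θ i * y i) - Ω y} (Ωstar θ))
    (M : ℝ) (hM : IsGreatest (Set.range fun i => ‖x i‖) M)
    (y : Fin N → ℝ) (hy : y ∈ stdSimplex ℝ (Fin N))
    (q : EuclideanSpace ℝ (Fin D)) (hq : q = ∑ i, y i • x i) :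
    -β⁻¹ * (Ω (fun _ => 1 / N) +
        Ωstar (fun i => β * (inner ℝ (x i) q : ℝ)) -
        (∑ i, (β * (inner ℝ (x i) q : ℝ)) * (1 / N)))
      + (1 / 2) * ‖q - (N : ℝ)⁻¹ • ∑ i, x i‖ ^ 2
      + (1 / 2) * (M ^ 2 - ‖(N : ℝ)⁻¹ • ∑ i, x i‖ ^ 2) ≤
    min (2 * M ^ 2) (-β⁻¹ * Ω (fun _ => 1 / N) + (1 / 2) * M ^ 2) := by
  set μ := (N : ℝ)⁻¹ • ∑ i, x i
  set θ := fun i => β * inner ℝ (x i) q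
  have hxM : ∀ i, ‖x i‖ ≤ M := fun i => hM.2 ⟨i, rfl⟩
  have hqM : ‖q‖ ≤ M := hq ▸ norm_sum_smul_le_of_mem_stdSimplex hy hxM
  have hμM : ‖μ‖ ≤ M := by
    simpa [μ, smul_sum] using
      norm_sum_smul_le_of_mem_stdSimplex (uniform_mem_stdSimplex N) hxM
  have hΩy : Ω y ≤ 0 := hconv.convexOn.nonpos_of_mem_stdSimplex
    (fun i => (congrArg Ω (funext (Pi.single_apply i 1))).trans (hzero i)) hy
  have hFY_uniform : β * inner ℝ μ q ≤ Ω (fun _ => 1 / N) + Ωstar θ := by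
    have := (hΩstar θ).2 ⟨_, uniform_mem_stdSimplex N, rfl⟩
    simp only [θ, mul_assoc, ← mul_sum, sum_inner_mul_one_div_eq_inner_mean] at this
    linarith
  have hFY_y : β * ‖q‖ ^ 2 ≤ Ωstar θ := by
    have := (hΩstar θ).2 ⟨y, hy, rfl⟩
    simp only [θ, mul_assoc, ← mul_sum, sum_inner_mul_eq_norm_sq hq] at this
    linarith
  have hmean_le := (le_inv_mul_iff₀ hβ).2 hFY_uniform
  have hnorm_le := (le_inv_mul_iff₀ hβ).2 hFY_y
  have hinner : -inner ℝ μ q ≤ M ^ 2 := by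
    rw [sq]
    exact (neg_le_abs _).trans <| (abs_real_inner_le_norm μ q).trans <|
      mul_le_mul hμM hqM (norm_nonneg q) ((norm_nonneg μ).trans hμM)
  have hq2 : ‖q‖ ^ 2 ≤ M ^ 2 := pow_le_pow_left₀ (norm_nonneg q) hqM 2
  rw [hfy_energy_eq x q hβ.ne']
  refine le_min (by linarith) ?_
  rw [mul_add]
  linarith [sq_nonneg ‖q‖]

/-- Upper bound on the sparse HFY energy. In the same setup as the lower
bound (Proposition 4), if `q = Xᵀy` with `y ∈ Δ_N`, then
`E(q) ≤ min{2M², −β⁻¹Ω(1/N) + ½M²}`. -/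
theorem hfy_energy_upper_bound {N D : ℕ} [NeZero N]
    (x : Fin N → EuclideanSpace ℝ (Fin D)) (β : ℝ) (hβ : 0 < β)
    (Ω : (Fin N → ℝ) → ℝ)
    (hzero : ∀ i : Fin N, Ω (fun j => if j = i then 1 else 0) = 0)
    (hconv : StrictConvexOn ℝ (stdSimplex ℝ (Fin N)) Ω)
    (hperm : ∀ (σ : Equiv.Perm (Fin N)), ∀ y ∈ stdSimplex ℝ (Fin N), Ω (y ∘ σ) = Ω y)
    (Ωstar : (Fin N → ℝ) → ℝ)
    (hΩstar : ∀ θ, IsGreatest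
      {v : ℝ | ∃ y ∈ stdSimplex ℝ (Fin N), v = (∑ i, θ i * y i) - Ω y} (Ωstar θ))
    (M : ℝ) (hM : IsGreatest (Set.range fun i => ‖x i‖) M)
    (y : Fin N → ℝ) (hy : y ∈ stdSimplex ℝ (Fin N))
    (q : EuclideanSpace ℝ (Fin D)) (hq : q = ∑ i, y i • x i) :
    -β⁻¹ * (Ω (fun _ => 1 / N) +
        Ωstar (fun i => β * (inner ℝ (x i) q : ℝ)) -
        (∑ i, (β * (inner ℝ (x i) q : ℝ)) * (1 / N)))
      + (1 / 2) * ‖q - (N : ℝ)⁻¹ • ∑ i, x i‖ ^ 2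
      + (1 / 2) * (M ^ 2 - ‖(N : ℝ)⁻¹ • ∑ i, x i‖ ^ 2) ≤
    min (2 * M ^ 2) (-β⁻¹ * Ω (fun _ => 1 / N) + (1 / 2) * M ^ 2) :=
  hfy_energy_upper_bound_general x β hβ Ω hzero hconv Ωstar hΩstar M hM y hy q hq
end

section
/- Suppose the Fenchel-Young loss L_Ω (with dom(Ω) = Δ_N) has margin m, i.e., ŷ_Ω(θ) = eᵢ iff θᵢ − max_{j≠i} θⱼ ≥ m. If the query q satisfies ⟨q, xᵢ − xⱼ⟩ ≥ m/β for all j ≠ i, then one Hopfield update gives Xᵀŷ_Ω(βXq) = xᵢ, i.e., the pattern xᵢ is retrieved exactly in one iteration. -/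
/-! The scores `θ = βXq` have gaps `θᵢ − θⱼ = β⟪q, xᵢ − xⱼ⟫ ≥ m`, so the margin property forces
`ŷ_Ω(θ) = eᵢ`, and `Xᵀeᵢ = xᵢ`. -/

theorem le_mul_inner_sub_mul_inner_of_div_le {E : Type*} [NormedAddCommGroup E]
    [InnerProductSpace ℝ E] {β m : ℝ} (hβ : 0 < β) {q a b : E}
    (h : m / β ≤ (inner ℝ q (a - b) : ℝ)) :
    m ≤ β * (inner ℝ a q : ℝ) - β * (inner ℝ b q : ℝ) := by
  rw [div_le_iff₀' hβ, inner_sub_right, ← real_inner_comm q a, ← real_inner_comm q b] at h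
  linarith

/-- One-step exact retrieval from the margin property. If the regularized
argmax `ŷ_Ω` has margin `m` (`ŷ_Ω(θ) = eᵢ` iff `θᵢ − θⱼ ≥ m` for all `j ≠ i`) and the
query satisfies `⟨q, xᵢ − xⱼ⟩ ≥ m/β` for all `j ≠ i`, then one Hopfield update
`q⁺ = Xᵀŷ_Ω(βXq)` returns exactly `xᵢ`. -/
theorem margin_one_step_retrieval {N D : ℕ}
    (x : Fin N → EuclideanSpace ℝ (Fin D)) (β : ℝ) (hβ : 0 < β) (m : ℝ)
    (yhat : (Fin N → ℝ) → (Fin N → ℝ))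
    (hmargin : ∀ (θ : Fin N → ℝ) (i : Fin N),
      yhat θ = (fun j => if j = i then 1 else 0) ↔ ∀ j, j ≠ i → m ≤ θ i - θ j)
    (q : EuclideanSpace ℝ (Fin D)) (i : Fin N)
    (hq : ∀ j, j ≠ i → m / β ≤ (inner ℝ q (x i - x j) : ℝ)) :
    ∑ j, yhat (fun l => β * (inner ℝ (x l) q : ℝ)) j • x j = x i := by
  have hy : yhat (fun l => β * (inner ℝ (x l) q : ℝ)) = fun j => if j = i then 1 else 0 :=
    (hmargin _ i).2 fun j hj => le_mul_inner_sub_mul_inner_of_div_le hβ (hq j hj)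
  simp only [hy, ite_smul, one_smul, zero_smul, Finset.sum_ite_eq', Finset.mem_univ, if_true]
end

section
/- Assume L_Ω has margin m, all patterns have norm ‖xᵢ‖ = M, and the separation Δᵢ := ⟨xᵢ,xᵢ⟩ − max_{j≠i}⟨xᵢ,xⱼ⟩ satisfies Δᵢ ≥ m/β + 2Mε. Then every q with ‖q − xᵢ‖ ≤ ε satisfies ⟨q, xᵢ − xⱼ⟩ ≥ m/β for all j ≠ i, and hence the Hopfield update retrieves xᵢ exactly in one iteration. -/
/-! Cauchy–Schwarz transfers the separation of `xᵢ` to any `q` within `ε` of it, losing at most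
`ε ‖xᵢ - xⱼ‖ ≤ 2Mε`. The surviving gap `β ⟨q, xᵢ - xⱼ⟩ ≥ m` is exactly the margin condition, so
`ŷ_Ω(βXq) = eᵢ` and `Xᵀ eᵢ = xᵢ`. -/

section SeparationTransfer

open scoped RealInnerProductSpace

variable {E : Type*} [NormedAddCommGroup E] [InnerProductSpace ℝ E]

theorem inner_sub_mul_norm_le_inner_of_norm_sub_le {q a : E} {ε : ℝ} (v : E)
    (hq : ‖q - a‖ ≤ ε) : ⟪a, v⟫ - ε * ‖v‖ ≤ ⟪q, v⟫ := by
  have hsplit : ⟪q, v⟫ = ⟪a, v⟫ + ⟪q - a, v⟫ := by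
    rw [← inner_add_left, add_sub_cancel]
  have hcs : -(ε * ‖v‖) ≤ ⟪q - a, v⟫ :=
    calc -(ε * ‖v‖) ≤ -(‖q - a‖ * ‖v‖) := by gcongr
      _ ≤ ⟪q - a, v⟫ := neg_le_of_abs_le (abs_real_inner_le_norm _ _)
  linarith

theorem le_inner_sub_of_separation {q a b : E} {M ε δ : ℝ} (ha : ‖a‖ = M) (hb : ‖b‖ = M)
    (hsep : δ + 2 * M * ε ≤ ⟪a, a⟫ - ⟪a, b⟫) (hq : ‖q - a‖ ≤ ε) :
    δ ≤ ⟪q, a - b⟫ := by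
  have hε : 0 ≤ ε := (norm_nonneg _).trans hq
  have hdiam : ‖a - b‖ ≤ 2 * M := by linarith [norm_sub_le a b]
  linarith [mul_le_mul_of_nonneg_left hdiam hε, inner_sub_mul_norm_le_inner_of_norm_sub_le (a - b) hq,
    inner_sub_right (𝕜 := ℝ) a a b]

end SeparationTransfer

theorem separation_one_step_retrieval_general {N D : ℕ}
    (x : Fin N → EuclideanSpace ℝ (Fin D)) (β : ℝ) (hβ : 0 < β)
    (m M ε : ℝ)
    (yhat : (Fin N → ℝ) → (Fin N → ℝ))
    (hmargin : ∀ (θ : Fin N → ℝ) (i : Fin N),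
      yhat θ = (fun j => if j = i then 1 else 0) ↔ ∀ j, j ≠ i → m ≤ θ i - θ j)
    (hnorm : ∀ j, ‖x j‖ = M)
    (i : Fin N)
    (hsep : ∀ j, j ≠ i →
      m / β + 2 * M * ε ≤ (inner ℝ (x i) (x i) : ℝ) - (inner ℝ (x i) (x j) : ℝ))
    (q : EuclideanSpace ℝ (Fin D)) (hqε : ‖q - x i‖ ≤ ε) :
    (∀ j, j ≠ i → m / β ≤ (inner ℝ q (x i - x j) : ℝ)) ∧
    ∑ j, yhat (fun l => β * (inner ℝ (x l) q : ℝ)) j • x j = x i := by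
  have hgap : ∀ j, j ≠ i → m / β ≤ (inner ℝ q (x i - x j) : ℝ) := fun j hj =>
    le_inner_sub_of_separation (hnorm i) (hnorm j) (hsep j hj) hqε
  have hone : yhat (fun l => β * (inner ℝ (x l) q : ℝ)) = fun j => if j = i then 1 else 0 := by
    refine (hmargin _ i).2 fun j hj => ?_
    calc m ≤ β * inner ℝ q (x i - x j) := (div_le_iff₀' hβ).1 (hgap j hj)
      _ = β * inner ℝ (x i) q - β * inner ℝ (x j) q := by
        rw [inner_sub_right, real_inner_comm (x i), real_inner_comm (x j)]; ring
  refine ⟨hgap, ?_⟩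
  simp [hone]

/-- Exact retrieval of ε-perturbed well-separated patterns (Proposition 5(3)).
If `L_Ω` has margin `m`, all patterns have norm `M`, and the separation satisfies
`Δᵢ ≥ m/β + 2Mε` (i.e. `⟨xᵢ, xᵢ⟩ − ⟨xᵢ, xⱼ⟩ ≥ m/β + 2Mε` for all `j ≠ i`), then any
`q` with `‖q − xᵢ‖ ≤ ε` satisfies `⟨q, xᵢ − xⱼ⟩ ≥ m/β` for all `j ≠ i`, and the Hopfield
update `q⁺ = Xᵀŷ_Ω(βXq)` retrieves `xᵢ` exactly in one iteration. -/
theorem separation_one_step_retrieval {N D : ℕ}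
    (x : Fin N → EuclideanSpace ℝ (Fin D)) (β : ℝ) (hβ : 0 < β)
    (m M ε : ℝ) (hε : 0 ≤ ε)
    (yhat : (Fin N → ℝ) → (Fin N → ℝ))
    (hmargin : ∀ (θ : Fin N → ℝ) (i : Fin N),
      yhat θ = (fun j => if j = i then 1 else 0) ↔ ∀ j, j ≠ i → m ≤ θ i - θ j)
    (hnorm : ∀ j, ‖x j‖ = M)
    (i : Fin N)
    (hsep : ∀ j, j ≠ i →
      m / β + 2 * M * ε ≤ (inner ℝ (x i) (x i) : ℝ) - (inner ℝ (x i) (x j) : ℝ))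
    (q : EuclideanSpace ℝ (Fin D)) (hqε : ‖q - x i‖ ≤ ε) :
    (∀ j, j ≠ i → m / β ≤ (inner ℝ q (x i - x j) : ℝ)) ∧
    ∑ j, yhat (fun l => β * (inner ℝ (x l) q : ℝ)) j • x j = x i :=
  separation_one_step_retrieval_general x β hβ m M ε yhat hmargin hnorm i hsep q hqε
end

section
/- Let 𝒴 ⊆ {0,1}^N with ‖y‖² = k for all y ∈ 𝒴 (k-subsets). If q satisfies ⟨q, Xᵀ(yᵢ − yⱼ)⟩ ≥ Dᵢ²/(2β) for all j ≠ i, where Dᵢ = max_j ‖yᵢ − yⱼ‖, then SparseMAP(βXq) = yᵢ and the structured Hopfield update q⁺ = Xᵀ SparseMAP(βXq) returns the pattern association Xᵀyᵢ in one iteration. -/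
/-!
If all structures have the same norm, the margin condition `‖y - y'‖² / 2 ≤ ⟪θ, y - y'⟫` is
equivalent to `⟪θ - y, y' - y⟫ ≤ 0` for every structure `y'`, and this variational inequality
passes to the convex hull. It says that `y` is the projection of `θ` onto the marginal polytope,
and the SparseMAP objective `⟪θ, μ⟫ - ‖μ‖² / 2 = (‖θ‖² - ‖θ - μ‖²) / 2` is uniquely maximised there.
For `k`-subsets every structure has squared norm `k`.
-/

open scoped RealInnerProductSpace

section MarginalPolytope

variable {E : Type*} [NormedAddCommGroup E] [InnerProductSpace ℝ E]

lemma real_inner_sub_eq_half_norm_sub_sq {a b : E} (h : ‖b‖ = ‖a‖) :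
    ⟪a, a - b⟫ = ‖a - b‖ ^ 2 / 2 := by
  rw [norm_sub_sq_real, inner_sub_right, real_inner_self_eq_norm_sq, h]
  ring

lemma real_inner_sub_sub_nonpos_of_margin {t y y' : E} (hnorm : ‖y'‖ = ‖y‖)
    (hmargin : ‖y - y'‖ ^ 2 / 2 ≤ ⟪t, y - y'⟫) : ⟪t - y, y' - y⟫ ≤ 0 := by
  have hy := real_inner_sub_eq_half_norm_sub_sq hnorm
  rw [← neg_sub y y', inner_neg_right, inner_sub_left]
  linarith

lemma real_inner_sub_nonpos_of_mem_convexHull {S : Set E} {v y μ : E}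
    (h : ∀ z ∈ S, ⟪v, z - y⟫ ≤ 0) (hμ : μ ∈ convexHull ℝ S) : ⟪v, μ - y⟫ ≤ 0 := by
  have hS : S ⊆ {z | ⟪v, z⟫ ≤ ⟪v, y⟫} := fun z hz => by
    simpa only [Set.mem_ofPred_eq, inner_sub_right, sub_nonpos] using h z hz
  have hμ' := convexHull_min hS (convex_halfSpace_le (innerₛₗ ℝ v).isLinear _) hμ
  rw [inner_sub_right, sub_nonpos]
  exact hμ'

lemma eq_of_isMaxOn_of_real_inner_sub_nonpos {C : Set E} {t s y : E}
    (hmax : IsMaxOn (fun μ => ⟪t, μ⟫ - 1 / 2 * ‖μ‖ ^ 2) C s) (hy : y ∈ C)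
    (hproj : ⟪t - y, s - y⟫ ≤ 0) : s = y := by
  have hgap : ⟪t, y⟫ - 1 / 2 * ‖y‖ ^ 2 - (⟪t, s⟫ - 1 / 2 * ‖s‖ ^ 2)
      = -⟪t - y, s - y⟫ + ‖s - y‖ ^ 2 / 2 := by
    rw [norm_sub_sq_real, inner_sub_left, inner_sub_right, inner_sub_right,
      real_inner_self_eq_norm_sq, real_inner_comm y s]
    ring
  have hle : ⟪t, y⟫ - 1 / 2 * ‖y‖ ^ 2 ≤ ⟪t, s⟫ - 1 / 2 * ‖s‖ ^ 2 := hmax hy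
  have hsq : ‖s - y‖ ^ 2 ≤ 0 := by linarith
  rw [← sub_eq_zero, ← norm_eq_zero]
  exact pow_eq_zero_iff two_ne_zero |>.mp (le_antisymm hsq (sq_nonneg _))

theorem eq_of_isMaxOn_convexHull_of_margin {S : Set E} {t s y : E}
    (hnorm : ∀ z ∈ S, ‖z‖ = ‖y‖) (hy : y ∈ S)
    (hmargin : ∀ z ∈ S, ‖y - z‖ ^ 2 / 2 ≤ ⟪t, y - z⟫) (hs : s ∈ convexHull ℝ S)
    (hmax : IsMaxOn (fun μ => ⟪t, μ⟫ - 1 / 2 * ‖μ‖ ^ 2) (convexHull ℝ S) s) : s = y :=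
  eq_of_isMaxOn_of_real_inner_sub_nonpos hmax (subset_convexHull ℝ S hy)
    (real_inner_sub_nonpos_of_mem_convexHull
      (fun z hz => real_inner_sub_sub_nonpos_of_margin (hnorm z hz) (hmargin z hz)) hs)

end MarginalPolytope

section EuclideanSpace

variable {ι : Type*} [Fintype ι]

lemma EuclideanSpace.norm_sq_eq_sum_of_forall_eq_zero_or_eq_one {y : EuclideanSpace ℝ ι}
    (h : ∀ i, y i = 0 ∨ y i = 1) : ‖y‖ ^ 2 = ∑ i, y i := by
  rw [EuclideanSpace.norm_sq_eq]
  refine Finset.sum_congr rfl fun i _ => ?_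
  rcases h i with hi | hi <;> simp [hi]

lemma EuclideanSpace.sum_mul_eq_inner_toLp (θ : ι → ℝ) (μ : EuclideanSpace ℝ ι) :
    ∑ i, θ i * μ i = ⟪WithLp.toLp 2 θ, μ⟫ := by
  simp [PiLp.inner_apply, mul_comm]

end EuclideanSpace

/-- Exact structured retrieval with SparseMAP over k-subsets. With
`𝒴 = {y ∈ {0,1}^N : 1ᵀy = k}` and `SparseMAP(θ) = argmax_{μ ∈ conv(𝒴)} ⟨θ,μ⟩ − ½‖μ‖²`,
if the query satisfies `⟨q, Xᵀ(yᵢ − y')⟩ ≥ Dᵢ²/(2β)` for all `y' ∈ 𝒴`, `y' ≠ yᵢ`, where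
`Dᵢ` bounds `‖yᵢ − y'‖`, then `SparseMAP(βXq) = yᵢ` and the structured Hopfield update
returns the pattern association `Xᵀyᵢ` in one iteration. -/
theorem sparsemap_one_step_structured_retrieval {N D : ℕ}
    (x : Fin N → EuclideanSpace ℝ (Fin D)) (k : ℕ) (β : ℝ) (hβ : 0 < β)
    (Y : Set (EuclideanSpace ℝ (Fin N)))
    (hY : Y = {y : EuclideanSpace ℝ (Fin N) |
      (∀ i, y i = 0 ∨ y i = 1) ∧ (∑ i, y i) = (k : ℝ)})
    (sparseMAP : (Fin N → ℝ) → EuclideanSpace ℝ (Fin N))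
    (hsm : ∀ θ : Fin N → ℝ, sparseMAP θ ∈ convexHull ℝ Y ∧
      ∀ μ ∈ convexHull ℝ Y,
        (∑ i, θ i * μ i) - (1 / 2) * ‖μ‖ ^ 2 ≤
          (∑ i, θ i * sparseMAP θ i) - (1 / 2) * ‖sparseMAP θ‖ ^ 2)
    (yi : EuclideanSpace ℝ (Fin N)) (hyi : yi ∈ Y)
    (Di : ℝ) (hDi : ∀ y' ∈ Y, ‖yi - y'‖ ≤ Di)
    (q : EuclideanSpace ℝ (Fin D))
    (hq : ∀ y' ∈ Y, y' ≠ yi →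
      Di ^ 2 / (2 * β) ≤ (inner ℝ q (∑ j, (yi j - y' j) • x j) : ℝ)) :
    sparseMAP (fun j => β * (inner ℝ (x j) q : ℝ)) = yi ∧
    ∑ j, sparseMAP (fun j => β * (inner ℝ (x j) q : ℝ)) j • x j = ∑ j, yi j • x j := by
  set θ : Fin N → ℝ := fun j => β * ⟪x j, q⟫
  have hnormY : ∀ y ∈ Y, ‖y‖ ^ 2 = k := fun y hy => by
    rw [hY] at hy
    rw [EuclideanSpace.norm_sq_eq_sum_of_forall_eq_zero_or_eq_one hy.1, hy.2]
  have hnorm : ∀ y ∈ Y, ‖y‖ = ‖yi‖ := fun y hy =>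
    (pow_left_inj₀ (norm_nonneg _) (norm_nonneg _) two_ne_zero).mp
      (by rw [hnormY y hy, hnormY yi hyi])
  have hmargin : ∀ y ∈ Y, ‖yi - y‖ ^ 2 / 2 ≤ ⟪WithLp.toLp 2 θ, yi - y⟫ := by
    intro y hy
    rcases eq_or_ne y yi with rfl | hne
    · simp
    have hdist : ‖yi - y‖ ^ 2 ≤ Di ^ 2 := pow_le_pow_left₀ (norm_nonneg _) (hDi y hy) 2
    have hq' := (div_le_iff₀' (by positivity)).mp (hq y hy hne)
    have hXq : ⟪WithLp.toLp 2 θ, yi - y⟫ = β * ⟪q, ∑ j, (yi j - y j) • x j⟫ := by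
      simp only [← EuclideanSpace.sum_mul_eq_inner_toLp, inner_sum, real_inner_smul_right,
        Finset.mul_sum, θ, real_inner_comm q, PiLp.sub_apply]
      exact Finset.sum_congr rfl fun j _ => by ring
    rw [hXq]
    linarith
  have hmax : IsMaxOn (fun μ => ⟪WithLp.toLp 2 θ, μ⟫ - 1 / 2 * ‖μ‖ ^ 2)
      (convexHull ℝ Y) (sparseMAP θ) := fun μ hμ => by
    simpa only [Set.mem_ofPred_eq, EuclideanSpace.sum_mul_eq_inner_toLp] using (hsm θ).2 μ hμ
  have hretrieve := eq_of_isMaxOn_convexHull_of_margin hnorm hyi hmargin (hsm θ).1 hmax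
  exact ⟨hretrieve, by rw [hretrieve]⟩
end
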